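/- Let x be a collision-free solution of the first-order singular Cucker–Smale system with β > 1, and set D_ν = max_i ν_i − min_i ν_i. For t ≥ 0 and 1 ≤ p ≤ N(N−1)/2, let D_p(t) denote the p-th smallest value among the N(N−1)/2 pairwise distances |x_i(t) − x_j(t)| with i < j. Fix an integer p with 1 ≤ p < N(N−1)/2 and suppose there is a constant C_1 > 0 such that D_q(t) ≥ C_1 for every q > p and every t ≥ 0. Then D_p(t) ≥ C_2 for every t ≥ 0, where C_2 = min{ (1 + (β−1)·(N/(2κ))·(2κ·max{|Φ(C_1)|, 1/(β−1)} + D_ν))^{−1/(β−1)}, 1, D_p(0), C_1/2 }. -/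

import Mathlib

open Real Filter Set Topology

/-- The potential function `Φ(x) = sign(x)·(β−1)⁻¹(1 − |x|^{1−β})` (with `Φ(0)=0`). -/
noncomputable def PhiCS (β y : ℝ) : ℝ := Real.sign y * (1 - |y| ^ (1 - β)) / (β - 1)

/-- A collision-free solution on `[0,∞)` of the first-order singular Cucker–Smale
system with short-range interaction:
`x_i'(t) = ν_i + (κ/N) Σ_{k≠i} Φ(x_k(t) − x_i(t))`, with `Σ_i x_i(0) = 0` and no
collisions for all `t ≥ 0`. -/
def IsCFSol (N : ℕ) (β κ : ℝ) (ν : Fin N → ℝ) (x : ℝ → Fin N → ℝ) : Prop :=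
  (∀ t ≥ (0:ℝ), ∀ i j : Fin N, i ≠ j → x t i ≠ x t j) ∧
  (∑ i, x 0 i = 0) ∧
  ∀ i, ∀ t ≥ (0:ℝ), HasDerivWithinAt (fun s => x s i)
    (ν i + (κ / (N:ℝ)) * ∑ k ∈ Finset.univ.erase i, PhiCS β (x t k - x t i)) (Set.Ici 0) t

/-- The diameter of a configuration `y : Fin N → ℝ`. -/
noncomputable def diam {N : ℕ} (y : Fin N → ℝ) : ℝ := ⨆ i, ⨆ j, (y i - y j)

/-- `Dp N y p` is the `p`-th smallest (1-indexed) of the `N(N−1)/2` pairwise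
distances `|y_i − y_j|`, `i < j`. -/
noncomputable def Dp (N : ℕ) (y : Fin N → ℝ) (p : ℕ) : ℝ :=
  (((Finset.univ.filter (fun q : Fin N × Fin N => q.1 < q.2)).val.map
    (fun q : Fin N × Fin N => |y q.1 - y q.2|)).sort (· ≤ ·)).getD (p - 1) 0

/-!
Suppose `D_p(t) < c < C₂` for some `t`. The `p`-th order statistic of the pairwise distances is
continuous along the solution, so there is a last time `τ < t` with `D_p(τ) = c`. At `τ` at most
`p` distances lie below `D_{p+1}(τ) ≥ C₁` and at least `p` are `≤ c`, so every distance below `C₁`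
is at most `c`. For a pair at distance exactly `c`, every other particle is then either within `c`
of both (it sits between them and pushes them apart) or `C₁`-far from both (its pull is at most
`max{|Φ(C₁)|, Φ^∞}`); since `c < C₂` the mutual repulsion `-Φ(c)` dominates, so the pair
separates. Hence no new distance drops below `c` right after `τ`, and `D_p` stays `≥ c` there,
contradicting the choice of `τ`.
-/

open Finset

namespace Multiset

variable {α : Type*} [LinearOrder α]

theorem card_filter_get_sort (m : Multiset α) (P : α → Prop) [DecidablePred P] :
    #{i | P ((m.sort (· ≤ ·)).get i)} = m.countP P := by
  rw [card_def, filter_val, ← countP_map, Fin.univ_val_map, List.ofFn_get, sort_eq]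

theorem lt_countP_lt_iff_getElem_sort_lt (m : Multiset α) (a : α) {j : ℕ}
    (hj : j < (m.sort (· ≤ ·)).length) :
    j < m.countP (· < a) ↔ (m.sort (· ≤ ·))[j] < a := by
  rw [← card_filter_get_sort]
  exact Tuple.lt_card_lt_iff_apply_lt_of_monotone (j := ⟨j, hj⟩)
    (pairwise_sort m _).sortedLE.monotone_get

theorem lt_countP_le_iff_getElem_sort_le (m : Multiset α) (a : α) {j : ℕ}
    (hj : j < (m.sort (· ≤ ·)).length) :
    j < m.countP (· ≤ a) ↔ (m.sort (· ≤ ·))[j] ≤ a := by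
  rw [← card_filter_get_sort]
  exact Tuple.lt_card_le_iff_apply_le_of_monotone (j := ⟨j, hj⟩)
    (pairwise_sort m _).sortedLE.monotone_get

end Multiset

theorem eventually_forall_mem_of_tendsto {ι X : Type*} {s : Finset ι} {l : Filter X}
    {f : ι → X → ℝ} {a : ι → ℝ} (hf : ∀ i, Tendsto (f i) l (𝓝 (a i))) {U : Set ℝ}
    (hU : IsOpen U) : ∀ᶠ z in l, ∀ i ∈ s, a i ∈ U → f i z ∈ U :=
  (eventually_all_finset s).2 fun i _ => by
    by_cases h : a i ∈ U
    · filter_upwards [hf i (hU.mem_nhds h)] with z hz _ using hz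
    · exact .of_forall fun _ h' => absurd h' h

theorem exists_last_eq_of_continuousOn {f : ℝ → ℝ} {a b c : ℝ} (hab : a ≤ b)
    (hf : ContinuousOn f (Icc a b)) (ha : c ≤ f a) (hb : f b < c) :
    ∃ τ ∈ Ico a b, f τ = c ∧ ∀ s ∈ Ioc τ b, f s < c := by
  set S := Icc a b ∩ f ⁻¹' Ici c
  have hbdd : BddAbove S := bddAbove_Icc.mono inter_subset_left
  obtain ⟨⟨hτa, hτb⟩, hτc⟩ : sSup S ∈ S :=
    (hf.preimage_isClosed_of_isClosed isClosed_Icc isClosed_Ici).csSup_mem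
      ⟨a, left_mem_Icc.2 hab, ha⟩ hbdd
  set τ := sSup S
  have hτb' : τ < b := hτb.lt_of_ne fun h => hb.not_ge (h ▸ hτc)
  have hafter : ∀ s ∈ Ioc τ b, f s < c := fun s hs =>
    lt_of_not_ge fun h => hs.1.not_ge (le_csSup hbdd ⟨⟨hτa.trans hs.1.le, hs.2⟩, h⟩)
  refine ⟨τ, ⟨hτa, hτb'⟩, le_antisymm ?_ hτc, hafter⟩
  have hlim : Tendsto f (𝓝[>] τ) (𝓝 (f τ)) := by
    rw [← nhdsWithin_Ioc_eq_nhdsGT hτb']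
    exact (hf τ ⟨hτa, hτb⟩).mono fun s hs => ⟨hτa.trans hs.1.le, hs.2⟩
  exact le_of_tendsto hlim (mem_of_superset (Ioc_mem_nhdsGT hτb') fun s hs => (hafter s hs).le)

theorem HasDerivWithinAt.eventually_lt_of_pos {f : ℝ → ℝ} {f' a : ℝ}
    (hf : HasDerivWithinAt f f' (Ioi a) a) (hf' : 0 < f') : ∀ᶠ s in 𝓝[>] a, f a < f s := by
  filter_upwards [((hasDerivWithinAt_iff_tendsto_slope' (lt_irrefl a)).1 hf).eventually
    (lt_mem_nhds hf'), self_mem_nhdsWithin] with s hslope hs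
  exact (slope_pos_iff hs).1 hslope

def ltPairs (N : ℕ) : Finset (Fin N × Fin N) := {q | q.1 < q.2}

theorem card_ltPairs (N : ℕ) : #(ltPairs N) = N * (N - 1) / 2 := by
  rw [ltPairs, Fintype.card_product_filter_lt, Fintype.card_fin, Nat.choose_two_right]

noncomputable def pairDists {N : ℕ} (y : Fin N → ℝ) : Multiset ℝ :=
  (ltPairs N).val.map fun q => |y q.1 - y q.2|

theorem Dp_eq_getD {N : ℕ} (y : Fin N → ℝ) (p : ℕ) :
    Dp N y p = ((pairDists y).sort (· ≤ ·)).getD (p - 1) 0 := rfl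

theorem length_sort_pairDists {N : ℕ} (y : Fin N → ℝ) :
    ((pairDists y).sort (· ≤ ·)).length = #(ltPairs N) := by
  rw [Multiset.length_sort, pairDists, Multiset.card_map, card_def]

theorem countP_pairDists {N : ℕ} (y : Fin N → ℝ) (P : ℝ → Prop) [DecidablePred P] :
    (pairDists y).countP P = #{q ∈ ltPairs N | P |y q.1 - y q.2|} := by
  rw [pairDists, Multiset.countP_map, card_def, filter_val]

section OrderStatistic

variable {N p : ℕ}

theorem Dp_eq_getElem (hp1 : 1 ≤ p) (hp : p ≤ #(ltPairs N)) (y : Fin N → ℝ) :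
    Dp N y p = ((pairDists y).sort (· ≤ ·))[p - 1]'(by rw [length_sort_pairDists]; omega) := by
  rw [Dp_eq_getD, List.getD_eq_getElem]

theorem le_Dp_iff (hp1 : 1 ≤ p) (hp : p ≤ #(ltPairs N)) (y : Fin N → ℝ) (c : ℝ) :
    c ≤ Dp N y p ↔ #{q ∈ ltPairs N | |y q.1 - y q.2| < c} < p := by
  rw [Dp_eq_getElem hp1 hp, ← not_lt, ← Multiset.lt_countP_lt_iff_getElem_sort_lt,
    countP_pairDists]
  omega

theorem Dp_le_iff (hp1 : 1 ≤ p) (hp : p ≤ #(ltPairs N)) (y : Fin N → ℝ) (c : ℝ) :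
    Dp N y p ≤ c ↔ p ≤ #{q ∈ ltPairs N | |y q.1 - y q.2| ≤ c} := by
  rw [Dp_eq_getElem hp1 hp, ← Multiset.lt_countP_le_iff_getElem_sort_le, countP_pairDists]
  omega

theorem Dp_nonneg (hp1 : 1 ≤ p) (hp : p ≤ #(ltPairs N)) (y : Fin N → ℝ) : 0 ≤ Dp N y p := by
  rw [le_Dp_iff hp1 hp]
  simp only [(abs_nonneg _).not_gt, filter_false, Finset.card_empty]
  exact hp1

theorem continuous_Dp (hp1 : 1 ≤ p) (hp : p ≤ #(ltPairs N)) :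
    Continuous fun y : Fin N → ℝ => Dp N y p := by
  refine continuous_iff_continuousAt.2 fun y => tendsto_order.2 ⟨fun c hc => ?_, fun c hc => ?_⟩
  all_goals
    have hdist (q : Fin N × Fin N) :
        Tendsto (fun z : Fin N → ℝ => |z q.1 - z q.2|) (𝓝 y) (𝓝 |y q.1 - y q.2|) :=
      ((continuous_apply q.1).sub (continuous_apply q.2)).abs.continuousAt
  · rw [← not_le, Dp_le_iff hp1 hp, not_le] at hc
    filter_upwards [eventually_forall_mem_of_tendsto (s := ltPairs N) hdist isOpen_Ioi]
      with z hz
    rw [← not_le, Dp_le_iff hp1 hp, not_le]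
    refine lt_of_le_of_lt (card_le_card fun q hq => ?_) hc
    simp only [mem_filter] at hq ⊢
    exact ⟨hq.1, not_lt.1 fun h => hq.2.not_gt (hz q hq.1 h)⟩
  · replace hc : Dp N y p < c := hc
    rw [← not_le, le_Dp_iff hp1 hp, not_lt] at hc
    filter_upwards [eventually_forall_mem_of_tendsto (s := ltPairs N) hdist isOpen_Iio]
      with z hz
    rw [← not_le, le_Dp_iff hp1 hp, not_lt]
    refine hc.trans (card_le_card fun q hq => ?_)
    simp only [mem_filter] at hq ⊢
    exact ⟨hq.1, hz q hq.1 hq.2⟩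

theorem abs_sub_le_of_Dp_le (hp1 : 1 ≤ p) (hp : p + 1 ≤ #(ltPairs N))
    {y : Fin N → ℝ} {c C₁ : ℝ} (hcC₁ : c < C₁) (hDp : Dp N y p ≤ c)
    (hDp1 : C₁ ≤ Dp N y (p + 1)) {k l : Fin N} (hkl : k ≠ l) (hC₁ : |y k - y l| < C₁) :
    |y k - y l| ≤ c := by
  have hsub : {q ∈ ltPairs N | |y q.1 - y q.2| ≤ c} ⊆ {q ∈ ltPairs N | |y q.1 - y q.2| < C₁} :=
    fun q hq => by
      simp only [mem_filter] at hq ⊢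
      exact ⟨hq.1, hq.2.trans_lt hcC₁⟩
  rw [Dp_le_iff hp1 (by omega)] at hDp
  rw [le_Dp_iff (by omega) hp] at hDp1
  have heq := eq_of_subset_of_card_le hsub (by omega)
  wlog hlt : k < l generalizing k l
  · rw [abs_sub_comm] at hC₁ ⊢
    exact this hkl.symm hC₁ (hkl.lt_or_gt.resolve_left hlt)
  have hmem : (k, l) ∈ {q ∈ ltPairs N | |y q.1 - y q.2| < C₁} :=
    mem_filter.2 ⟨by simp [ltPairs, hlt], hC₁⟩
  rw [← heq] at hmem
  exact (mem_filter.1 hmem).2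

end OrderStatistic

section Potential

variable {β : ℝ}

@[simp] theorem PhiCS_zero : PhiCS β 0 = 0 := by simp [PhiCS]

theorem PhiCS_neg (y : ℝ) : PhiCS β (-y) = -PhiCS β y := by
  simp only [PhiCS, Real.sign_neg, abs_neg]
  ring

theorem PhiCS_of_pos {y : ℝ} (hy : 0 < y) : PhiCS β y = (1 - y ^ (1 - β)) / (β - 1) := by
  rw [PhiCS, Real.sign_of_pos hy, abs_of_pos hy, one_mul]

theorem PhiCS_nonpos (hβ : 1 < β) {y : ℝ} (hy0 : 0 ≤ y) (hy1 : y ≤ 1) : PhiCS β y ≤ 0 := by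
  rcases hy0.eq_or_lt with rfl | hy0
  · rw [PhiCS_zero]
  rw [PhiCS_of_pos hy0]
  have : 1 ≤ y ^ (1 - β) := Real.one_le_rpow_of_pos_of_le_one_of_nonpos hy0 hy1 (by linarith)
  exact div_nonpos_of_nonpos_of_nonneg (by linarith) (by linarith)

theorem PhiCS_le_PhiCS (hβ : 1 < β) {y z : ℝ} (hy : 0 < y) (hyz : y ≤ z) :
    PhiCS β y ≤ PhiCS β z := by
  rw [PhiCS_of_pos hy, PhiCS_of_pos (hy.trans_le hyz)]
  have : z ^ (1 - β) ≤ y ^ (1 - β) := Real.rpow_le_rpow_of_nonpos hy hyz (by linarith)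
  gcongr

theorem PhiCS_le_inv (hβ : 1 < β) {y : ℝ} (hy : 0 < y) : PhiCS β y ≤ 1 / (β - 1) := by
  rw [PhiCS_of_pos hy]
  exact div_le_div_of_nonneg_right (by linarith [Real.rpow_nonneg hy.le (1 - β)]) (by linarith)

theorem abs_PhiCS_le_max (hβ : 1 < β) {C₁ z : ℝ} (hC₁ : 0 < C₁) (hz : C₁ ≤ |z|) :
    |PhiCS β z| ≤ max |PhiCS β C₁| (1 / (β - 1)) := by
  have hpos : 0 < |z| := hC₁.trans_le hz
  have key : |PhiCS β (|z|)| ≤ max |PhiCS β C₁| (1 / (β - 1)) := by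
    have h := abs_le_max_abs_abs (PhiCS_le_PhiCS hβ hC₁ hz) (PhiCS_le_inv hβ hpos)
    rwa [abs_of_pos (one_div_pos.2 (sub_pos.2 hβ))] at h
  rcases le_total 0 z with h | h
  · rwa [abs_of_nonneg h] at key
  · rwa [abs_of_nonpos h, PhiCS_neg, abs_neg] at key

-- The threshold `(1 + (β - 1) X) ^ (-1 / (β - 1))` is `Φ⁻¹(-X)`.
theorem PhiCS_lt_neg_of_lt_rpow (hβ : 1 < β) {c X : ℝ} (hc : 0 < c) (hX : 0 < 1 + (β - 1) * X)
    (h : c < (1 + (β - 1) * X) ^ (-(1 / (β - 1)))) : PhiCS β c < -X := by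
  have hβ' : 0 < β - 1 := sub_pos.2 hβ
  have hpow : 1 + (β - 1) * X < c ^ (1 - β) := by
    have := Real.rpow_lt_rpow_of_neg hc h (show 1 - β < 0 by linarith)
    rwa [← Real.rpow_mul hX.le, show -(1 / (β - 1)) * (1 - β) = 1 by field_simp; ring,
      Real.rpow_one] at this
  rw [PhiCS_of_pos hc, div_lt_iff₀ hβ']
  linarith

end Potential

theorem sub_le_diam {N : ℕ} (y : Fin N → ℝ) (i j : Fin N) : y i - y j ≤ diam y :=
  (le_ciSup (Set.finite_range _).bddAbove j).trans
    (le_ciSup (f := fun i => ⨆ j, y i - y j) (Set.finite_range _).bddAbove i)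

-- With `a = y k - y i` and `y j - y i = c`: a third particle `k` either lies between `i` and `j`
-- and pushes them apart, or is `C₁`-far from both.
theorem neg_two_mul_le_PhiCS_sub_PhiCS {β M C₁ c a : ℝ} (hβ : 1 < β)
    (hM : ∀ z, C₁ ≤ |z| → |PhiCS β z| ≤ M) (hc1 : c ≤ 1) (hcC₁ : 2 * c < C₁)
    (ha : |a| < C₁ → |a| ≤ c) (hac : |a - c| < C₁ → |a - c| ≤ c) :
    -(2 * M) ≤ PhiCS β (a - c) - PhiCS β a := by
  have hM0 : 0 ≤ M := (abs_nonneg _).trans (hM C₁ (le_abs_self C₁))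
  by_cases hfar : C₁ ≤ |a| ∧ C₁ ≤ |a - c|
  · linarith [(abs_le.1 (hM _ hfar.1)).2, (abs_le.1 (hM _ hfar.2)).1]
  have hnear : |a| ≤ c ∧ |a - c| ≤ c := by
    have habs := abs_sub_abs_le_abs_sub a (a - c)
    have habs' := abs_sub_abs_le_abs_sub (a - c) a
    simp only [sub_sub_cancel, sub_sub_cancel_left, abs_neg] at habs habs'
    rcases not_and_or.1 hfar with h | h
    · have h1 := ha (not_le.1 h)
      rw [abs_of_nonneg ((abs_nonneg a).trans h1)] at habs'
      exact ⟨h1, hac (by linarith)⟩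
    · have h2 := hac (not_le.1 h)
      rw [abs_of_nonneg ((abs_nonneg _).trans h2)] at habs
      exact ⟨ha (by linarith), h2⟩
  obtain ⟨⟨-, ha_le⟩, ⟨hac_ge, -⟩⟩ := And.imp abs_le.1 abs_le.1 hnear
  have h1 : PhiCS β a ≤ 0 := PhiCS_nonpos hβ (by linarith) (by linarith)
  have h2 : PhiCS β (c - a) ≤ 0 := PhiCS_nonpos hβ (by linarith) (by linarith)
  rw [show a - c = -(c - a) by ring, PhiCS_neg]
  linarith

noncomputable def csVelocity (N : ℕ) (β κ : ℝ) (ν y : Fin N → ℝ) (i : Fin N) : ℝ :=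
  ν i + (κ / (N : ℝ)) * ∑ k ∈ univ.erase i, PhiCS β (y k - y i)

theorem csVelocity_sub_csVelocity {N : ℕ} (β κ : ℝ) (ν y : Fin N → ℝ) (i j : Fin N) :
    csVelocity N β κ ν y j - csVelocity N β κ ν y i =
      ν j - ν i + κ / N * ∑ k, (PhiCS β (y k - y j) - PhiCS β (y k - y i)) := by
  have hdiag (l : Fin N) : ∑ k ∈ univ.erase l, PhiCS β (y k - y l) = ∑ k, PhiCS β (y k - y l) :=
    sum_erase _ (by simp)
  simp only [csVelocity, hdiag, sum_sub_distrib]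
  ring

theorem sum_PhiCS_sub_PhiCS_ge {N : ℕ} {β M C₁ c : ℝ} (hβ : 1 < β)
    (hM : ∀ z, C₁ ≤ |z| → |PhiCS β z| ≤ M) (hc1 : c ≤ 1) (hcC₁ : 2 * c < C₁)
    {y : Fin N → ℝ} (hclose : ∀ k l, k ≠ l → |y k - y l| < C₁ → |y k - y l| ≤ c)
    {i j : Fin N} (hne : i ≠ j) (hij : y j - y i = c) :
    2 * -PhiCS β c - N * (2 * M) ≤ ∑ k, (PhiCS β (y k - y j) - PhiCS β (y k - y i)) := by
  have hM0 : 0 ≤ M := (abs_nonneg _).trans (hM C₁ (le_abs_self C₁))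
  have hthird : ∀ k ∈ (univ.erase i).erase j,
      -(2 * M) ≤ PhiCS β (y k - y j) - PhiCS β (y k - y i) := by
    intro k hk
    obtain ⟨hkj, hki, -⟩ := mem_erase.1 hk |>.imp_right mem_erase.1
    have hj : y k - y j = y k - y i - c := by rw [← hij]; ring
    rw [hj]
    exact neg_two_mul_le_PhiCS_sub_PhiCS hβ hM hc1 hcC₁ (hclose k i hki)
      (by rw [← hj]; exact hclose k j hkj)
  rw [← add_sum_erase _ _ (mem_univ i), ← add_sum_erase _ _ (mem_erase.2 ⟨hne.symm, mem_univ j⟩)]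
  have hji : y i - y j = -c := by linarith
  simp only [sub_self, PhiCS_zero, hji, hij, PhiCS_neg]
  have hrest := card_nsmul_le_sum _ _ _ hthird
  have hcard : (#((univ.erase i).erase j) : ℝ) ≤ N := by
    exact_mod_cast (card_le_univ _).trans (by simp)
  rw [nsmul_eq_mul] at hrest
  nlinarith

theorem csVelocity_sub_pos {N : ℕ} {β κ M C₁ c : ℝ} (hβ : 1 < β) (hκ : 0 < κ) (ν : Fin N → ℝ)
    (hM : ∀ z, C₁ ≤ |z| → |PhiCS β z| ≤ M) (hc0 : 0 < c) (hc1 : c ≤ 1) (hcC₁ : 2 * c < C₁)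
    (hcA : c < (1 + (β - 1) * ((N : ℝ) / (2 * κ)) * (2 * κ * M + diam ν)) ^ (-(1 / (β - 1))))
    {y : Fin N → ℝ} (hclose : ∀ k l, k ≠ l → |y k - y l| < C₁ → |y k - y l| ≤ c)
    {i j : Fin N} (hij : y j - y i = c) :
    0 < csVelocity N β κ ν y j - csVelocity N β κ ν y i := by
  have hne : i ≠ j := by rintro rfl; rw [sub_self] at hij; exact hc0.ne hij
  have hN : (0 : ℝ) < N := Nat.cast_pos.2 (Fin.pos i)
  have hM0 : 0 ≤ M := (abs_nonneg _).trans (hM C₁ (le_abs_self C₁))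
  have hsum := sum_PhiCS_sub_PhiCS_ge hβ hM hc1 hcC₁ hclose hne hij
  have hD0 : 0 ≤ diam ν := by simpa using sub_le_diam ν i i
  have hΦc : (N / (2 * κ)) * (2 * κ * M + diam ν) < -PhiCS β c := by
    have := PhiCS_lt_neg_of_lt_rpow hβ hc0
      (X := N / (2 * κ) * (2 * κ * M + diam ν)) (by positivity) (by rwa [← mul_assoc])
    linarith
  have hgain : diam ν < κ / N * (2 * -PhiCS β c - N * (2 * M)) := by
    have h1 : κ / N * (2 * (N / (2 * κ) * (2 * κ * M + diam ν))) = 2 * κ * M + diam ν := by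
      field_simp
    have h2 : κ / N * (N * (2 * M)) = 2 * κ * M := by field_simp
    have h3 := mul_lt_mul_of_pos_left (mul_lt_mul_of_pos_left hΦc two_pos) (div_pos hκ hN)
    rw [mul_sub]
    linarith
  rw [csVelocity_sub_csVelocity]
  linarith [sub_le_diam ν i j, mul_le_mul_of_nonneg_left hsum (div_pos hκ hN).le]

section Solution

variable {N : ℕ} {β κ M C₁ c τ : ℝ} {ν : Fin N → ℝ} {x : ℝ → Fin N → ℝ}

theorem IsCFSol.continuousOn (hx : IsCFSol N β κ ν x) : ContinuousOn x (Ici 0) :=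
  continuousOn_pi.2 fun i s hs => (hx.2.2 i s hs).continuousWithinAt

theorem IsCFSol.hasDerivWithinAt_Ioi (hx : IsCFSol N β κ ν x) (i : Fin N) (hτ : 0 ≤ τ) :
    HasDerivWithinAt (fun s => x s i) (csVelocity N β κ ν (x τ) i) (Ioi τ) τ :=
  (hx.2.2 i τ hτ).mono fun _ hs => hτ.trans (le_of_lt hs)

theorem IsCFSol.eventually_lt_abs_sub (hx : IsCFSol N β κ ν x) (hβ : 1 < β) (hκ : 0 < κ)
    (hM : ∀ z, C₁ ≤ |z| → |PhiCS β z| ≤ M) (hc0 : 0 < c) (hc1 : c ≤ 1) (hcC₁ : 2 * c < C₁)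
    (hcA : c < (1 + (β - 1) * ((N : ℝ) / (2 * κ)) * (2 * κ * M + diam ν)) ^ (-(1 / (β - 1))))
    (hτ : 0 ≤ τ) (hclose : ∀ k l, k ≠ l → |x τ k - x τ l| < C₁ → |x τ k - x τ l| ≤ c)
    {k l : Fin N} (hkl : |x τ k - x τ l| = c) : ∀ᶠ s in 𝓝[>] τ, c < |x s k - x s l| := by
  wlog h : x τ k ≤ x τ l generalizing k l
  · simpa only [abs_sub_comm] using this (by rwa [abs_sub_comm]) (le_of_not_ge h)
  have hgap : x τ l - x τ k = c := by
    rwa [abs_sub_comm, abs_of_nonneg (sub_nonneg.2 h)] at hkl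
  have hder := (hx.hasDerivWithinAt_Ioi l hτ).sub (hx.hasDerivWithinAt_Ioi k hτ)
  filter_upwards [hder.eventually_lt_of_pos
    (csVelocity_sub_pos hβ hκ ν hM hc0 hc1 hcC₁ hcA hclose hgap)] with s hs
  rw [Pi.sub_apply, Pi.sub_apply, hgap] at hs
  rw [abs_sub_comm]
  exact hs.trans_le (le_abs_self _)

theorem IsCFSol.eventually_le_Dp (hx : IsCFSol N β κ ν x) (hβ : 1 < β) (hκ : 0 < κ)
    (hM : ∀ z, C₁ ≤ |z| → |PhiCS β z| ≤ M) (hc0 : 0 < c) (hc1 : c ≤ 1) (hcC₁ : 2 * c < C₁)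
    (hcA : c < (1 + (β - 1) * ((N : ℝ) / (2 * κ)) * (2 * κ * M + diam ν)) ^ (-(1 / (β - 1))))
    {p : ℕ} (hp1 : 1 ≤ p) (hp : p + 1 ≤ #(ltPairs N)) (hτ : 0 ≤ τ)
    (hDτ : Dp N (x τ) p = c) (hDτ1 : C₁ ≤ Dp N (x τ) (p + 1)) :
    ∀ᶠ s in 𝓝[>] τ, c ≤ Dp N (x s) p := by
  have hclose : ∀ k l, k ≠ l → |x τ k - x τ l| < C₁ → |x τ k - x τ l| ≤ c :=
    fun _ _ => abs_sub_le_of_Dp_le hp1 hp (by linarith) hDτ.le hDτ1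
  have hpair : ∀ q ∈ ltPairs N,
      ∀ᶠ s in 𝓝[>] τ, c ≤ |x τ q.1 - x τ q.2| → c ≤ |x s q.1 - x s q.2| := by
    intro q _
    rcases lt_trichotomy |x τ q.1 - x τ q.2| c with hlt | heq | hgt
    · exact .of_forall fun _ h => absurd h hlt.not_ge
    · filter_upwards [hx.eventually_lt_abs_sub hβ hκ hM hc0 hc1 hcC₁ hcA hτ hclose heq]
        with s hs _ using hs.le
    · have hcont (k : Fin N) : Tendsto (fun s => x s k) (𝓝[>] τ) (𝓝 (x τ k)) :=
        (hx.hasDerivWithinAt_Ioi k hτ).continuousWithinAt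
      filter_upwards [((hcont q.1).sub (hcont q.2)).abs.eventually (lt_mem_nhds hgt)]
        with s hs _ using hs.le
  have hτp : #{q ∈ ltPairs N | |x τ q.1 - x τ q.2| < c} < p :=
    (le_Dp_iff hp1 (by omega) _ _).1 hDτ.ge
  filter_upwards [(eventually_all_finset _).2 hpair] with s hs
  refine (le_Dp_iff hp1 (by omega) _ _).2 (lt_of_le_of_lt (card_le_card fun q hq => ?_) hτp)
  simp only [mem_filter] at hq ⊢
  exact ⟨hq.1, lt_of_not_ge fun h => hq.2.not_ge (hs q hq.1 h)⟩

end Solution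

theorem stmt10_general (N : ℕ) (β κ : ℝ) (hβ : 1 < β) (hκ : 0 < κ)
    (ν : Fin N → ℝ)
    (x : ℝ → Fin N → ℝ) (hx : IsCFSol N β κ ν x)
    (p : ℕ) (hp1 : 1 ≤ p) (hp2 : p < N * (N - 1) / 2)
    (C1 : ℝ) (hC1 : 0 < C1)
    (hq : ∀ q : ℕ, p < q → q ≤ N * (N - 1) / 2 → ∀ t ≥ (0:ℝ), C1 ≤ Dp N (x t) q) :
    ∀ t ≥ (0:ℝ),
      min (min
        ((1 + (β - 1) * ((N:ℝ) / (2 * κ)) *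
            (2 * κ * max |PhiCS β C1| (1 / (β - 1)) + diam ν)) ^ (-(1 / (β - 1))))
        1)
        (min (Dp N (x 0) p) (C1 / 2))
      ≤ Dp N (x t) p := by
  intro t ht
  by_contra! hlt
  have hp : p + 1 ≤ #(ltPairs N) := by rw [card_ltPairs]; omega
  obtain ⟨c, hct, hcC₂⟩ := exists_between hlt
  simp only [lt_min_iff] at hcC₂
  obtain ⟨⟨hcA, hc1⟩, hc0D, hcC₁⟩ := hcC₂
  have hc0 : 0 < c := (Dp_nonneg hp1 (by omega) _).trans_lt hct
  have hcont : ContinuousOn (fun s => Dp N (x s) p) (Icc 0 t) :=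
    (continuous_Dp hp1 (by omega)).comp_continuousOn (hx.continuousOn.mono Icc_subset_Ici_self)
  obtain ⟨τ, ⟨hτ0, hτt⟩, hτc, hafter⟩ := exists_last_eq_of_continuousOn ht hcont hc0D.le hct
  obtain ⟨s, hs, hst⟩ := ((hx.eventually_le_Dp hβ hκ (fun z => abs_PhiCS_le_max hβ hC1)
    hc0 hc1.le (by linarith) hcA hp1 hp hτ0 hτc (hq (p + 1) (by omega) (by omega) τ hτ0)).and
    (Ioc_mem_nhdsGT hτt)).exists
  exact (hafter s hst).not_ge hs

/-- Inductive step of the uniform lower bound: if all larger ordered pairwise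
distances are uniformly bounded below by `C₁`, then `D_p` is uniformly bounded
below by `C₂`. -/
theorem stmt10 (N : ℕ) (hN : 2 ≤ N) (β κ : ℝ) (hβ : 1 < β) (hκ : 0 < κ)
    (ν : Fin N → ℝ) (hν : ∑ i, ν i = 0)
    (x : ℝ → Fin N → ℝ) (hx : IsCFSol N β κ ν x)
    (p : ℕ) (hp1 : 1 ≤ p) (hp2 : p < N * (N - 1) / 2)
    (C1 : ℝ) (hC1 : 0 < C1)
    (hq : ∀ q : ℕ, p < q → q ≤ N * (N - 1) / 2 → ∀ t ≥ (0:ℝ), C1 ≤ Dp N (x t) q) :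
    ∀ t ≥ (0:ℝ),
      min (min
        ((1 + (β - 1) * ((N:ℝ) / (2 * κ)) *
            (2 * κ * max |PhiCS β C1| (1 / (β - 1)) + diam ν)) ^ (-(1 / (β - 1))))
        1)
        (min (Dp N (x 0) p) (C1 / 2))
      ≤ Dp N (x t) p :=
  stmt10_general N β κ hβ hκ ν x hx p hp1 hp2 C1 hC1 hq
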